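/- Fix k > 0, ρ ∈ (0,1), c₁ > 0, c₂ > 0, and let a ∈ ℝ be the unique real with g_{k,ρ}(−a) = c₁. Define J(t) := ∫_{t}^{∞} g_{k,ρ}(ρs − ρt − a)·φ(s) ds − c₁·Φ(−t) − c₂. Then J is strictly decreasing on ℝ, J(t) → +∞ as t → −∞, and J(t) → −c₂ as t → +∞; consequently J has a unique zero t* ∈ ℝ. -/

import Mathlib

/-!
Write `h(u) = g(ρu - a) - c₁` (`entrySurplus`), so that `J(t) = ∫_{s ≥ t} h(s - t) φ(s) ds - c₂`.
Since `g' = k e^{kx + k²(1-ρ²)/2} Φ(…) > 0` (the two `φ`-terms of `g'` cancel after completing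
the square), `h` increases strictly from `h(0) = 0` to `+∞` and grows at most exponentially. As
`t` increases both the domain and the integrand shrink, so `J` decreases strictly. After the
substitution `s = t + u` the integral becomes `∫_{u ≥ 0} h(u) φ(u + t) du`, and
`φ(u + t) ≤ e^{Mu} φ(u)` for `t ≥ -M` lets dominated convergence give continuity and `J → -c₂`
at `+∞`; for `t ≤ 0` the mass on `[0, 1]` gives `J(t) ≥ h(-t) φ(1) - c₂ → ∞`. The intermediate
value theorem gives the zero.
-/

open MeasureTheory Real Set Filter

/-- Standard normal density. -/
noncomputable def stdPhi (x : ℝ) : ℝ := (Real.sqrt (2 * Real.pi))⁻¹ * Real.exp (-x ^ 2 / 2)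

/-- Standard normal CDF. -/
noncomputable def stdPhiCDF (x : ℝ) : ℝ := ∫ u in Set.Iic x, stdPhi u

/-- Normalized expected-profit function `g_{k,ρ}`. -/
noncomputable def gkr (k ρ x : ℝ) : ℝ :=
  Real.exp (k * x + k ^ 2 * (1 - ρ ^ 2) / 2) *
      stdPhiCDF ((x + k * (1 - ρ ^ 2)) / Real.sqrt (1 - ρ ^ 2)) -
    stdPhiCDF (x / Real.sqrt (1 - ρ ^ 2))

/-- Free-entry residual along the activation-condition line `p = ρt + a`. -/
noncomputable def Jres (k ρ c₁ c₂ a t : ℝ) : ℝ :=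
  (∫ s in Set.Ici t, gkr k ρ (ρ * s - ρ * t - a) * stdPhi s) - c₁ * stdPhiCDF (-t) - c₂

open ProbabilityTheory Topology

lemma setIntegral_lt_setIntegral_of_forall_lt {X : Type*} [MeasurableSpace X] {μ : Measure X}
    {f g : X → ℝ} {s : Set X} (hs : MeasurableSet s) (hμs : μ s ≠ 0) (hf : IntegrableOn f s μ)
    (hg : IntegrableOn g s μ) (hlt : ∀ x ∈ s, f x < g x) :
    ∫ x in s, f x ∂μ < ∫ x in s, g x ∂μ := by
  rw [← sub_pos, ← integral_sub hg hf, setIntegral_pos_iff_support_of_nonneg_ae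
    (ae_restrict_of_forall_mem hs fun x hx => (sub_pos.2 (hlt x hx)).le) (hg.sub hf),
    show (Function.support fun x => g x - f x) ∩ s = s from
      inter_eq_right.2 fun x hx => (sub_pos.2 (hlt x hx)).ne']
  exact pos_iff_ne_zero.2 hμs

lemma stdPhi_eq_gaussianPDFReal : stdPhi = gaussianPDFReal 0 1 := by
  ext x
  simp [stdPhi, gaussianPDFReal]

lemma stdPhi_pos (x : ℝ) : 0 < stdPhi x := by
  rw [stdPhi_eq_gaussianPDFReal]
  exact gaussianPDFReal_pos _ _ _ one_ne_zero

lemma continuous_stdPhi : Continuous stdPhi := by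
  unfold stdPhi
  fun_prop

lemma integrable_stdPhi : Integrable stdPhi :=
  stdPhi_eq_gaussianPDFReal ▸ integrable_gaussianPDFReal 0 1

lemma integral_stdPhi : ∫ x, stdPhi x = 1 := by
  rw [stdPhi_eq_gaussianPDFReal]
  exact integral_gaussianPDFReal_eq_one 0 one_ne_zero

lemma stdPhi_add (u t : ℝ) : stdPhi (u + t) = exp (-(u * t) - t ^ 2 / 2) * stdPhi u := by
  unfold stdPhi
  rw [mul_left_comm, ← exp_add]
  ring_nf

lemma stdPhi_add_le_exp_mul {u t M : ℝ} (hu : 0 ≤ u) (ht : -M ≤ t) :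
    stdPhi (u + t) ≤ exp (M * u) * stdPhi u := by
  rw [stdPhi_add]
  gcongr
  · exact (stdPhi_pos u).le
  · nlinarith

lemma integrable_exp_mul_stdPhi (b : ℝ) : Integrable fun s => exp (b * s) * stdPhi s := by
  have hshift : ∀ s, exp (b * s) * stdPhi s = exp (b ^ 2 / 2) * stdPhi (s - b) := fun s => by
    rw [sub_eq_add_neg, stdPhi_add, ← mul_assoc, ← exp_add]
    ring_nf
  simpa only [hshift] using (integrable_stdPhi.comp_sub_right b).const_mul _

lemma tendsto_stdPhi_atTop : Tendsto stdPhi atTop (𝓝 0) := by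
  have hsq : Tendsto (fun x : ℝ => -x ^ 2 / 2) atTop atBot :=
    (tendsto_neg_atTop_atBot.comp (tendsto_pow_atTop two_ne_zero)).atBot_div_const two_pos
  have := (tendsto_exp_atBot.comp hsq).const_mul (√(2 * π))⁻¹
  rw [mul_zero] at this
  exact this

lemma hasDerivAt_stdPhiCDF (x : ℝ) : HasDerivAt stdPhiCDF (stdPhi x) x := by
  have hΦ : stdPhiCDF = fun y => stdPhiCDF 0 + ∫ u in (0 : ℝ)..y, stdPhi u := by
    ext y
    rw [← intervalIntegral.integral_Iic_sub_Iic integrable_stdPhi.integrableOn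
      integrable_stdPhi.integrableOn, stdPhiCDF, stdPhiCDF]
    ring
  rw [hΦ]
  exact ((continuous_stdPhi.integral_hasStrictDerivAt 0 x).hasDerivAt).const_add _

lemma stdPhiCDF_pos (x : ℝ) : 0 < stdPhiCDF x := by
  simpa [stdPhiCDF] using setIntegral_lt_setIntegral_of_forall_lt measurableSet_Iic (by simp)
    integrableOn_zero integrable_stdPhi.integrableOn fun u _ => stdPhi_pos u

lemma stdPhiCDF_le_one (x : ℝ) : stdPhiCDF x ≤ 1 :=
  integral_stdPhi ▸ setIntegral_le_integral integrable_stdPhi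
    (Eventually.of_forall fun u => (stdPhi_pos u).le)

lemma monotone_stdPhiCDF : Monotone stdPhiCDF :=
  (strictMono_of_hasDerivAt_pos hasDerivAt_stdPhiCDF stdPhi_pos).monotone

lemma stdPhiCDF_neg (x : ℝ) : stdPhiCDF (-x) = ∫ u in Ici x, stdPhi u := by
  rw [stdPhiCDF, ← integral_comp_neg_Ioi, integral_Ici_eq_integral_Ioi]
  simp [stdPhi]

section gkr

variable {k ρ : ℝ}

lemma gkr_le_exp (x : ℝ) : gkr k ρ x ≤ exp (k * x + k ^ 2 * (1 - ρ ^ 2) / 2) := by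
  have h₁ := stdPhiCDF_le_one ((x + k * (1 - ρ ^ 2)) / √(1 - ρ ^ 2))
  have h₂ := stdPhiCDF_pos (x / √(1 - ρ ^ 2))
  have hE := exp_pos (k * x + k ^ 2 * (1 - ρ ^ 2) / 2)
  unfold gkr
  nlinarith

lemma exp_mul_stdPhi_add_div_sqrt (hρ : ρ ^ 2 < 1) (x : ℝ) :
    exp (k * x + k ^ 2 * (1 - ρ ^ 2) / 2) * stdPhi ((x + k * (1 - ρ ^ 2)) / √(1 - ρ ^ 2)) =
      stdPhi (x / √(1 - ρ ^ 2)) := by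
  have hτ : 0 < 1 - ρ ^ 2 := by linarith
  unfold stdPhi
  rw [mul_left_comm, ← exp_add, div_pow, div_pow, sq_sqrt hτ.le]
  congr 2
  field_simp
  ring

lemma hasDerivAt_gkr (hρ : ρ ^ 2 < 1) (x : ℝ) :
    HasDerivAt (gkr k ρ) (k * exp (k * x + k ^ 2 * (1 - ρ ^ 2) / 2) *
      stdPhiCDF ((x + k * (1 - ρ ^ 2)) / √(1 - ρ ^ 2))) x := by
  have key := exp_mul_stdPhi_add_div_sqrt (k := k) hρ x
  set σ := √(1 - ρ ^ 2)
  have hE : HasDerivAt (fun x => exp (k * x + k ^ 2 * (1 - ρ ^ 2) / 2))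
      (exp (k * x + k ^ 2 * (1 - ρ ^ 2) / 2) * k) x := by
    simpa using (((hasDerivAt_id x).const_mul k).add_const (k ^ 2 * (1 - ρ ^ 2) / 2)).exp
  have hΦ₁ := (hasDerivAt_stdPhiCDF _).comp x
    (((hasDerivAt_id x).add_const (k * (1 - ρ ^ 2))).div_const σ)
  have hΦ₂ := (hasDerivAt_stdPhiCDF _).comp x ((hasDerivAt_id x).div_const σ)
  refine ((hE.mul hΦ₁).sub hΦ₂).congr_deriv ?_
  simp only [Function.comp, id]
  linear_combination key / σ

lemma continuous_gkr (hρ : ρ ^ 2 < 1) : Continuous (gkr k ρ) :=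
  continuous_iff_continuousAt.2 fun x => (hasDerivAt_gkr hρ x).continuousAt

lemma strictMono_gkr (hk : 0 < k) (hρ : ρ ^ 2 < 1) : StrictMono (gkr k ρ) :=
  strictMono_of_hasDerivAt_pos (hasDerivAt_gkr hρ) fun x => by
    have := stdPhiCDF_pos ((x + k * (1 - ρ ^ 2)) / √(1 - ρ ^ 2))
    positivity

lemma tendsto_gkr_atTop (hk : 0 < k) (hρ : ρ ^ 2 < 1) : Tendsto (gkr k ρ) atTop atTop := by
  have hσ : 0 < √(1 - ρ ^ 2) := sqrt_pos.2 (by linarith)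
  set m := stdPhiCDF (k * (1 - ρ ^ 2) / √(1 - ρ ^ 2))
  have hlower : ∀ᶠ x in atTop, exp (k * x + k ^ 2 * (1 - ρ ^ 2) / 2) * m - 1 ≤ gkr k ρ x := by
    filter_upwards [eventually_ge_atTop 0] with x hx
    have hm : m ≤ stdPhiCDF ((x + k * (1 - ρ ^ 2)) / √(1 - ρ ^ 2)) :=
      monotone_stdPhiCDF (by gcongr; linarith)
    have h₁ := stdPhiCDF_le_one (x / √(1 - ρ ^ 2))
    have hE := exp_pos (k * x + k ^ 2 * (1 - ρ ^ 2) / 2)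
    unfold gkr
    nlinarith
  refine tendsto_atTop_mono' _ hlower (tendsto_atTop_add_const_right _ _ ?_)
  refine Tendsto.atTop_mul_const (stdPhiCDF_pos _) (tendsto_exp_atTop.comp ?_)
  exact tendsto_atTop_add_const_right _ _ (tendsto_id.const_mul_atTop hk)

end gkr

noncomputable def gaussTail (h : ℝ → ℝ) (t : ℝ) : ℝ := ∫ s in Ici t, h (s - t) * stdPhi s

section gaussTail

variable {h : ℝ → ℝ} {C b : ℝ}

lemma gaussTail_eq_integral_Ici_zero (h : ℝ → ℝ) (t : ℝ) :
    gaussTail h t = ∫ u in Ici 0, h u * stdPhi (u + t) := by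
  have hpre : (· + t) ⁻¹' Ici t = Ici (0 : ℝ) := by
    ext u
    simp
  rw [gaussTail, ← (measurePreserving_add_right volume t).setIntegral_preimage_emb
    (measurableEmbedding_addRight t), hpre]
  simp

lemma norm_mul_stdPhi_add_le (h_nonneg : ∀ u, 0 ≤ u → 0 ≤ h u)
    (h_le : ∀ u, 0 ≤ u → h u ≤ C * exp (b * u)) {u t M : ℝ} (hu : 0 ≤ u) (ht : -M ≤ t) :
    ‖h u * stdPhi (u + t)‖ ≤ C * (exp ((b + M) * u) * stdPhi u) := by
  rw [Real.norm_of_nonneg (mul_nonneg (h_nonneg u hu) (stdPhi_pos _).le)]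
  calc h u * stdPhi (u + t) ≤ C * exp (b * u) * (exp (M * u) * stdPhi u) :=
        mul_le_mul (h_le u hu) (stdPhi_add_le_exp_mul hu ht) (stdPhi_pos _).le
          ((h_nonneg u hu).trans (h_le u hu))
    _ = C * (exp ((b + M) * u) * stdPhi u) := by rw [add_mul, exp_add]; ring

lemma integrableOn_gaussTail_integrand (hcont : Continuous h)
    (h_nonneg : ∀ u, 0 ≤ u → 0 ≤ h u) (h_le : ∀ u, 0 ≤ u → h u ≤ C * exp (b * u)) (t : ℝ) :
    IntegrableOn (fun s => h (s - t) * stdPhi s) (Ici t) := by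
  have hbound := ((integrable_exp_mul_stdPhi (b + -t)).comp_sub_right t).const_mul C
  refine Integrable.mono' hbound.integrableOn
    ((hcont.comp (continuous_sub_right t)).mul continuous_stdPhi).aestronglyMeasurable
    (ae_restrict_of_forall_mem measurableSet_Ici fun s hs => ?_)
  simpa using norm_mul_stdPhi_add_le h_nonneg h_le (sub_nonneg.2 hs) (neg_neg t).le

lemma strictAnti_gaussTail (hcont : Continuous h) (h_nonneg : ∀ u, 0 ≤ u → 0 ≤ h u)
    (h_le : ∀ u, 0 ≤ u → h u ≤ C * exp (b * u)) (hmono : StrictMonoOn h (Ici 0)) :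
    StrictAnti (gaussTail h) := by
  intro t₁ t₂ hlt
  have hint := integrableOn_gaussTail_integrand hcont h_nonneg h_le
  calc gaussTail h t₂ < ∫ s in Ici t₂, h (s - t₁) * stdPhi s := by
        refine setIntegral_lt_setIntegral_of_forall_lt measurableSet_Ici (by simp) (hint t₂)
          ((hint t₁).mono_set (Ici_subset_Ici.2 hlt.le)) fun s hs => ?_
        have hs₂ : 0 ≤ s - t₂ := sub_nonneg.2 hs
        gcongr
        · exact stdPhi_pos s
        · exact hmono hs₂ (hs₂.trans (by linarith)) (by linarith)
    _ ≤ gaussTail h t₁ :=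
        setIntegral_mono_set (hint t₁)
          (ae_restrict_of_forall_mem measurableSet_Ici fun s hs =>
            mul_nonneg (h_nonneg _ (sub_nonneg.2 hs)) (stdPhi_pos s).le)
          (Ici_subset_Ici.2 hlt.le).eventuallyLE

lemma continuous_gaussTail (hcont : Continuous h) (h_nonneg : ∀ u, 0 ≤ u → 0 ≤ h u)
    (h_le : ∀ u, 0 ≤ u → h u ≤ C * exp (b * u)) : Continuous (gaussTail h) := by
  rw [funext (gaussTail_eq_integral_Ici_zero h), continuous_iff_continuousAt]
  intro t₀
  refine continuousAt_of_dominated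
    (bound := fun u => C * (exp ((b + (|t₀| + 1)) * u) * stdPhi u)) ?_ ?_
    ((integrable_exp_mul_stdPhi _).const_mul C).integrableOn
    (ae_of_all _ fun u => (continuous_const.mul
      (continuous_stdPhi.comp (continuous_const_add u))).continuousAt)
  · exact Eventually.of_forall fun t =>
      (hcont.mul (continuous_stdPhi.comp (continuous_add_const t))).aestronglyMeasurable
  · filter_upwards [Ioi_mem_nhds (sub_one_lt t₀)] with t ht
    refine ae_restrict_of_forall_mem measurableSet_Ici fun u hu => ?_
    exact norm_mul_stdPhi_add_le h_nonneg h_le hu (by linarith [neg_abs_le t₀, mem_Ioi.1 ht])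

lemma tendsto_gaussTail_atTop (hcont : Continuous h) (h_nonneg : ∀ u, 0 ≤ u → 0 ≤ h u)
    (h_le : ∀ u, 0 ≤ u → h u ≤ C * exp (b * u)) : Tendsto (gaussTail h) atTop (𝓝 0) := by
  rw [funext (gaussTail_eq_integral_Ici_zero h)]
  have hlim := tendsto_integral_filter_of_dominated_convergence
    (μ := volume.restrict (Ici 0)) (F := fun t u => h u * stdPhi (u + t)) (f := fun _ => 0)
    (fun u => C * (exp ((b + 0) * u) * stdPhi u))
    (Eventually.of_forall fun t =>
      (hcont.mul (continuous_stdPhi.comp (continuous_add_const t))).aestronglyMeasurable)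
    (by
      filter_upwards [eventually_ge_atTop 0] with t ht
      exact ae_restrict_of_forall_mem measurableSet_Ici fun u hu =>
        norm_mul_stdPhi_add_le h_nonneg h_le hu (by simpa using ht))
    ((integrable_exp_mul_stdPhi _).const_mul C).integrableOn
    (ae_of_all _ fun u => by
      simpa using (tendsto_stdPhi_atTop.comp
        (tendsto_atTop_add_const_left _ u tendsto_id)).const_mul (h u))
  simpa using hlim

lemma tendsto_gaussTail_atBot (hcont : Continuous h) (h_nonneg : ∀ u, 0 ≤ u → 0 ≤ h u)
    (h_le : ∀ u, 0 ≤ u → h u ≤ C * exp (b * u)) (hmono : MonotoneOn h (Ici 0))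
    (htop : Tendsto h atTop atTop) : Tendsto (gaussTail h) atBot atTop := by
  have hint := integrableOn_gaussTail_integrand hcont h_nonneg h_le
  have hlower : ∀ᶠ t in atBot, h (-t) * stdPhi 1 ≤ gaussTail h t := by
    filter_upwards [eventually_le_atBot 0] with t ht
    have hsub : Icc (0 : ℝ) 1 ⊆ Ici t := fun s hs => ht.trans hs.1
    have hpoint : ∀ s ∈ Icc (0 : ℝ) 1, h (-t) * stdPhi 1 ≤ h (s - t) * stdPhi s := by
      intro s hs
      have hs₀ : 0 ≤ s - t := by linarith [hs.1]
      refine mul_le_mul (hmono (neg_nonneg.2 ht) hs₀ (by linarith [hs.1])) ?_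
        (stdPhi_pos 1).le (h_nonneg _ hs₀)
      simpa using stdPhi_add_le_exp_mul (M := 0) hs.1 (show -0 ≤ 1 - s by linarith [hs.2])
    calc h (-t) * stdPhi 1 = h (-t) * stdPhi 1 * volume.real (Icc (0 : ℝ) 1) := by simp
      _ ≤ ∫ s in Icc 0 1, h (s - t) * stdPhi s :=
          setIntegral_ge_of_const_le_real measurableSet_Icc (by simp) hpoint
            ((hint t).mono_set hsub)
      _ ≤ gaussTail h t :=
          setIntegral_mono_set (hint t)
            (ae_restrict_of_forall_mem measurableSet_Ici fun s hs =>
              mul_nonneg (h_nonneg _ (sub_nonneg.2 hs)) (stdPhi_pos s).le)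
            hsub.eventuallyLE
  exact tendsto_atTop_mono' _ hlower
    ((htop.comp tendsto_neg_atBot_atTop).atTop_mul_const (stdPhi_pos 1))

end gaussTail

lemma StrictAnti.existsUnique_eq_zero {f : ℝ → ℝ} {l : ℝ} (hf : StrictAnti f)
    (hcont : Continuous f) (hbot : Tendsto f atBot atTop) (htop : Tendsto f atTop (𝓝 l))
    (hl : l < 0) : ∃! t, f t = 0 := by
  obtain ⟨x, hx⟩ := (hbot.eventually_ge_atTop 0).exists
  obtain ⟨y, hy⟩ := (htop.eventually (eventually_lt_nhds hl)).exists
  obtain ⟨t, ht⟩ := intermediate_value_univ y x hcont ⟨hy.le, hx⟩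
  exact ⟨t, ht, fun s hs => hf.injective (hs.trans ht.symm)⟩

noncomputable def entrySurplus (k ρ c₁ a u : ℝ) : ℝ := gkr k ρ (ρ * u - a) - c₁

section entrySurplus

variable {k ρ c₁ a : ℝ}

lemma continuous_entrySurplus (hρ : ρ ^ 2 < 1) : Continuous (entrySurplus k ρ c₁ a) :=
  ((continuous_gkr hρ).comp (by fun_prop)).sub continuous_const

lemma strictMono_entrySurplus (hk : 0 < k) (hρ₀ : 0 < ρ) (hρ : ρ ^ 2 < 1) :
    StrictMono (entrySurplus k ρ c₁ a) := fun u v huv =>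
  sub_lt_sub_right (strictMono_gkr hk hρ (by gcongr)) c₁

lemma entrySurplus_nonneg (hk : 0 < k) (hρ₀ : 0 < ρ) (hρ : ρ ^ 2 < 1) (ha : gkr k ρ (-a) = c₁)
    {u : ℝ} (hu : 0 ≤ u) : 0 ≤ entrySurplus k ρ c₁ a u := by
  simpa [entrySurplus, ha] using (strictMono_entrySurplus (c₁ := c₁) (a := a) hk hρ₀ hρ).monotone hu

lemma entrySurplus_le_exp (hc₁ : 0 ≤ c₁) (u : ℝ) :
    entrySurplus k ρ c₁ a u ≤ exp (k * -a + k ^ 2 * (1 - ρ ^ 2) / 2) * exp (k * ρ * u) := by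
  have hexp : k * (ρ * u - a) + k ^ 2 * (1 - ρ ^ 2) / 2 =
      k * -a + k ^ 2 * (1 - ρ ^ 2) / 2 + k * ρ * u := by ring
  rw [entrySurplus, ← exp_add, ← hexp]
  linarith [gkr_le_exp (k := k) (ρ := ρ) (ρ * u - a)]

lemma tendsto_entrySurplus_atTop (hk : 0 < k) (hρ₀ : 0 < ρ) (hρ : ρ ^ 2 < 1) :
    Tendsto (entrySurplus k ρ c₁ a) atTop atTop := by
  refine tendsto_atTop_add_const_right _ (-c₁) ((tendsto_gkr_atTop hk hρ).comp ?_)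
  exact tendsto_atTop_add_const_right _ (-a) (tendsto_id.const_mul_atTop hρ₀)

lemma Jres_eq_gaussTail {c₂ t : ℝ}
    (hint : IntegrableOn (fun s => entrySurplus k ρ c₁ a (s - t) * stdPhi s) (Ici t)) :
    Jres k ρ c₁ c₂ a t = gaussTail (entrySurplus k ρ c₁ a) t - c₂ := by
  have hsplit : ∀ s, gkr k ρ (ρ * s - ρ * t - a) * stdPhi s =
      entrySurplus k ρ c₁ a (s - t) * stdPhi s + c₁ * stdPhi s := fun s => by
    rw [entrySurplus, mul_sub]
    ring
  rw [Jres, gaussTail, stdPhiCDF_neg, ← integral_const_mul, funext hsplit,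
    integral_add hint (integrable_stdPhi.const_mul c₁).integrableOn]
  ring

end entrySurplus

theorem Jres_strictAnti_unique_zero
    (k ρ c₁ c₂ a : ℝ) (hk : 0 < k) (hρ : ρ ∈ Set.Ioo (0 : ℝ) 1)
    (hc₁ : 0 < c₁) (hc₂ : 0 < c₂)
    (ha : gkr k ρ (-a) = c₁) :
    StrictAnti (Jres k ρ c₁ c₂ a) ∧
    Filter.Tendsto (Jres k ρ c₁ c₂ a) Filter.atBot Filter.atTop ∧
    Filter.Tendsto (Jres k ρ c₁ c₂ a) Filter.atTop (nhds (-c₂)) ∧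
    ∃! t : ℝ, Jres k ρ c₁ c₂ a t = 0 := by
  obtain ⟨hρ₀, hρ₁⟩ := hρ
  have hρ₂ : ρ ^ 2 < 1 := by nlinarith
  have hcont := continuous_entrySurplus (k := k) (c₁ := c₁) (a := a) hρ₂
  have hmono := strictMono_entrySurplus (c₁ := c₁) (a := a) hk hρ₀ hρ₂
  have hnonneg : ∀ u, 0 ≤ u → 0 ≤ entrySurplus k ρ c₁ a u :=
    fun u => entrySurplus_nonneg hk hρ₀ hρ₂ ha
  have hle : ∀ u, 0 ≤ u → entrySurplus k ρ c₁ a u ≤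
      exp (k * -a + k ^ 2 * (1 - ρ ^ 2) / 2) * exp (k * ρ * u) :=
    fun u _ => entrySurplus_le_exp hc₁.le u
  have hJ : Jres k ρ c₁ c₂ a = fun t => gaussTail (entrySurplus k ρ c₁ a) t - c₂ :=
    funext fun t => Jres_eq_gaussTail (integrableOn_gaussTail_integrand hcont hnonneg hle t)
  have hanti : StrictAnti (Jres k ρ c₁ c₂ a) := hJ ▸ fun x y hxy =>
    sub_lt_sub_right (strictAnti_gaussTail hcont hnonneg hle (hmono.strictMonoOn _) hxy) c₂
  have hbot : Tendsto (Jres k ρ c₁ c₂ a) atBot atTop := hJ ▸ tendsto_atTop_add_const_right _ (-c₂)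
    (tendsto_gaussTail_atBot hcont hnonneg hle (hmono.monotone.monotoneOn _)
      (tendsto_entrySurplus_atTop hk hρ₀ hρ₂))
  have htop : Tendsto (Jres k ρ c₁ c₂ a) atTop (𝓝 (-c₂)) := by
    simpa [hJ] using (tendsto_gaussTail_atTop hcont hnonneg hle).sub_const c₂
  exact ⟨hanti, hbot, htop, hanti.existsUnique_eq_zero
    (hJ ▸ (continuous_gaussTail hcont hnonneg hle).sub continuous_const) hbot htop (by linarith)⟩
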